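/- arXiv:1811.09484 — 8 statements merged into one kernel-verified Lean document; each statement's English description precedes it below -/
import Mathlib

section
/- Let λ0, λ1 > 0 and set 2λ = λ0 + λ1. Let F0, F1, p0, p1 : [0,∞) → ℝ be continuous functions such that for all t ≥ 0: p0(t) = e^{−λ0 t} F0(t) + ∫_0^t λ0 e^{−λ0 τ} p1(t−τ) dτ and p1(t) = e^{−λ1 t} F1(t) + ∫_0^t λ1 e^{−λ1 τ} p0(t−τ) dτ. Then for all t ≥ 0: p0(t) = e^{−λ0 t} F0(t) + λ0 λ1 ∫_0^t [B00(t−τ) e^{−λ0 τ} F0(τ) + B01(t−τ) e^{−λ1 τ} F1(τ)] dτ and p1(t) = e^{−λ1 t} F1(t) + λ0 λ1 ∫_0^t [B10(t−τ) e^{−λ0 τ} F0(τ) + B11(t−τ) e^{−λ1 τ} F1(τ)] dτ. -/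
/-!
Put `a(t) = ∫₀ᵗ e^{-λ₀(t-σ)} p₁(σ) dσ` and `c(t) = ∫₀ᵗ e^{-λ₁(t-σ)} p₀(σ) dσ`, so that
`p₀ = e^{-λ₀t} F₀ + λ₀ a` and `p₁ = e^{-λ₁t} F₁ + λ₁ c`. Differentiating gives the linear system
`a' = f₁ + λ₁ c - λ₀ a`, `c' = f₀ + λ₀ a - λ₁ c` with `fᵢ = e^{-λᵢt} Fᵢ` and `a(0) = c(0) = 0`.
Its generator has eigenvalues `0` and `-2λ`, and the eigencombinations decouple:
`(a + c)' = f₀ + f₁` and `d' = λ₀ f₁ - λ₁ f₀ - 2λ d` for `d = λ₀ a - λ₁ c`. Variation of constants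
solves both scalar equations, and recombining them produces exactly the kernels `λ₁ B₀₀, λ₁ B₀₁`.
The formula for `p₁` is the formula for `p₀` with the two states exchanged.
-/

open Real MeasureTheory intervalIntegral Set

theorem hasDerivAt_exp_const_mul (c t : ℝ) :
    HasDerivAt (fun u => exp (c * u)) (c * exp (c * t)) t := by
  simpa [mul_comm] using ((hasDerivAt_id t).const_mul c).exp

noncomputable def expConv (κ : ℝ) (g : ℝ → ℝ) (t : ℝ) : ℝ :=
  ∫ τ in (0:ℝ)..t, exp (-κ * (t - τ)) * g τ

theorem expConv_eq_exp_mul_integral (κ : ℝ) (g : ℝ → ℝ) (t : ℝ) :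
    expConv κ g t = exp (-κ * t) * ∫ τ in (0:ℝ)..t, exp (κ * τ) * g τ := by
  rw [expConv, ← intervalIntegral.integral_const_mul]
  refine integral_congr fun τ _ => ?_
  rw [← mul_assoc, ← exp_add]
  ring_nf

theorem integral_mul_exp_mul_comp_sub (c : ℝ) (q : ℝ → ℝ) (t : ℝ) :
    ∫ τ in (0:ℝ)..t, c * exp (-c * τ) * q (t - τ) = c * expConv c q t := by
  have hsub := integral_comp_sub_left (a := 0) (b := t) (fun σ => c * (exp (-c * (t - σ)) * q σ)) t
  simp only [sub_sub_cancel, sub_zero, sub_self, ← mul_assoc] at hsub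
  rw [hsub, expConv, ← intervalIntegral.integral_const_mul]
  simp only [mul_assoc]

theorem continuousOn_expConv {κ t : ℝ} {g : ℝ → ℝ} (hg : ContinuousOn g (uIcc 0 t)) :
    ContinuousOn (expConv κ g) (uIcc 0 t) := by
  have hint : IntegrableOn (fun τ => exp (κ * τ) * g τ) (uIcc 0 t) :=
    (by fun_prop : ContinuousOn (fun τ => exp (κ * τ) * g τ) _).integrableOn_compact isCompact_uIcc
  rw [show expConv κ g = _ from funext (expConv_eq_exp_mul_integral κ g)]
  exact (by fun_prop : Continuous fun u => exp (-κ * u)).continuousOn.mul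
    (continuousOn_primitive_interval hint)

theorem hasDerivAt_expConv {κ t : ℝ} {g : ℝ → ℝ} (hg : ContinuousOn g (Ici 0)) (ht : 0 < t) :
    HasDerivAt (expConv κ g) (g t - κ * expConv κ g t) t := by
  have hcont : ContinuousOn (fun τ => exp (κ * τ) * g τ) (Ici 0) := by fun_prop
  have hprim : HasDerivAt (fun u => ∫ τ in (0:ℝ)..u, exp (κ * τ) * g τ) (exp (κ * t) * g t) t :=
    integral_hasDerivAt_right
      (hcont.mono (uIcc_of_le ht.le ▸ Icc_subset_Ici_self)).intervalIntegrable
      (hcont.mono Ioi_subset_Ici_self |>.stronglyMeasurableAtFilter isOpen_Ioi t ht)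
      (hcont.continuousAt (Ici_mem_nhds ht))
  have hcancel : exp (-κ * t) * exp (κ * t) = 1 := by
    rw [← exp_add, neg_mul, neg_add_cancel, exp_zero]
  rw [show expConv κ g = _ from funext (expConv_eq_exp_mul_integral κ g)]
  refine ((hasDerivAt_exp_const_mul (-κ) t).mul hprim).congr_deriv ?_
  linear_combination g t * hcancel

theorem eq_expConv_of_hasDerivAt {κ t : ℝ} {y h : ℝ → ℝ} (ht : 0 ≤ t)
    (hy : ContinuousOn y (uIcc 0 t)) (hh : ContinuousOn h (uIcc 0 t))
    (hy' : ∀ u ∈ Ioo 0 t, HasDerivAt y (h u - κ * y u) u) (hy0 : y 0 = 0) :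
    y t = expConv κ h t := by
  have hftc : ∫ u in (0:ℝ)..t, exp (κ * u) * h u = exp (κ * t) * y t - exp (κ * 0) * y 0 :=
    integral_eq_sub_of_hasDerivAt_of_le ht (uIcc_of_le ht ▸ by fun_prop)
      (fun u hu => ((hasDerivAt_exp_const_mul κ u).mul (hy' u hu)).congr_deriv (by ring))
      (by fun_prop : ContinuousOn (fun u => exp (κ * u) * h u) _).intervalIntegrable
  rw [expConv_eq_exp_mul_integral, hftc, hy0, mul_zero, sub_zero, ← mul_assoc, ← exp_add,
    neg_mul, neg_add_cancel, exp_zero, one_mul]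

theorem mul_expConv_eq_of_volterra {l0 l1 t : ℝ} {f0 f1 p0 p1 : ℝ → ℝ}
    (hf0 : ContinuousOn f0 (Ici 0)) (hf1 : ContinuousOn f1 (Ici 0))
    (hp0 : ContinuousOn p0 (Ici 0)) (hp1 : ContinuousOn p1 (Ici 0))
    (h0 : ∀ u, 0 ≤ u → p0 u = f0 u + l0 * expConv l0 p1 u)
    (h1 : ∀ u, 0 ≤ u → p1 u = f1 u + l1 * expConv l1 p0 u) (ht : 0 ≤ t) :
    (l0 + l1) * expConv l0 p1 t
      = l1 * expConv 0 (fun u => f0 u + f1 u) t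
        + expConv (l0 + l1) (fun u => l0 * f1 u - l1 * f0 u) t := by
  set a := expConv l0 p1
  set c := expConv l1 p0
  have hsub : uIcc 0 t ⊆ Ici 0 := uIcc_of_le ht ▸ Icc_subset_Ici_self
  have ha : ContinuousOn a (uIcc 0 t) := continuousOn_expConv (hp1.mono hsub)
  have hc : ContinuousOn c (uIcc 0 t) := continuousOn_expConv (hp0.mono hsub)
  have ha' : ∀ u ∈ Ioo 0 t, HasDerivAt a (f1 u + l1 * c u - l0 * a u) u := fun u hu =>
    h1 u hu.1.le ▸ hasDerivAt_expConv hp1 hu.1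
  have hc' : ∀ u ∈ Ioo 0 t, HasDerivAt c (f0 u + l0 * a u - l1 * c u) u := fun u hu =>
    h0 u hu.1.le ▸ hasDerivAt_expConv hp0 hu.1
  have hsum : a t + c t = expConv 0 (fun u => f0 u + f1 u) t :=
    eq_expConv_of_hasDerivAt (y := fun u => a u + c u) ht (ha.add hc)
      ((hf0.add hf1).mono hsub)
      (fun u hu => ((ha' u hu).add (hc' u hu)).congr_deriv (by ring)) (by simp [a, c, expConv])
  have hdiff : l0 * a t - l1 * c t = expConv (l0 + l1) (fun u => l0 * f1 u - l1 * f0 u) t :=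
    eq_expConv_of_hasDerivAt (y := fun u => l0 * a u - l1 * c u) ht
      ((ha.const_smul l0).sub (hc.const_smul l1))
      (((hf1.const_smul l0).sub (hf0.const_smul l1)).mono hsub)
      (fun u hu => (((ha' u hu).const_mul l0).sub ((hc' u hu).const_mul l1)).congr_deriv
        (by ring)) (by simp [a, c, expConv])
  linear_combination l1 * hsum + hdiff

theorem mul_integral_renewalKernel_eq {l0 l1 t : ℝ} {F0 F1 Bs Bc : ℝ → ℝ}
    (hl1 : l1 ≠ 0) (hl : l0 + l1 ≠ 0)
    (hBs : ∀ s, Bs s = (1 - exp (-(l0 + l1) * s)) / (l0 + l1))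
    (hBc : ∀ s, Bc s = (1 + (l0 / l1) * exp (-(l0 + l1) * s)) / (l0 + l1))
    (hF0 : IntervalIntegrable (fun u => exp (-l0 * u) * F0 u) volume 0 t)
    (hF1 : IntervalIntegrable (fun u => exp (-l1 * u) * F1 u) volume 0 t) :
    (l0 + l1) * (l1 * ∫ τ in (0:ℝ)..t,
        (Bs (t - τ) * exp (-l0 * τ) * F0 τ + Bc (t - τ) * exp (-l1 * τ) * F1 τ))
      = l1 * expConv 0 (fun u => exp (-l0 * u) * F0 u + exp (-l1 * u) * F1 u) t
        + expConv (l0 + l1)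
          (fun u => l0 * (exp (-l1 * u) * F1 u) - l1 * (exp (-l0 * u) * F0 u)) t := by
  have hsum := (hF0.add hF1).continuousOn_mul (g := fun τ => exp (-0 * (t - τ))) (by fun_prop)
  have hdiff := ((hF1.const_mul l0).sub (hF0.const_mul l1)).continuousOn_mul
    (g := fun τ => exp (-(l0 + l1) * (t - τ))) (by fun_prop)
  simp only [expConv, ← intervalIntegral.integral_const_mul]
  rw [← integral_add (hsum.const_mul l1) hdiff]
  refine integral_congr fun τ _ => ?_
  simp only [hBs, hBc, neg_zero, zero_mul, exp_zero, one_mul]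
  field_simp
  ring

theorem renewal_representation_fst {l0 l1 : ℝ} (hl1 : l1 ≠ 0) (hl : l0 + l1 ≠ 0)
    {F0 F1 p0 p1 Bs Bc : ℝ → ℝ}
    (hF0 : ContinuousOn F0 (Ici 0)) (hF1 : ContinuousOn F1 (Ici 0))
    (hp0 : ContinuousOn p0 (Ici 0)) (hp1 : ContinuousOn p1 (Ici 0))
    (hBs : ∀ s, Bs s = (1 - exp (-(l0 + l1) * s)) / (l0 + l1))
    (hBc : ∀ s, Bc s = (1 + (l0 / l1) * exp (-(l0 + l1) * s)) / (l0 + l1))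
    (heq0 : ∀ t, 0 ≤ t →
      p0 t = exp (-l0 * t) * F0 t + ∫ τ in (0:ℝ)..t, l0 * exp (-l0 * τ) * p1 (t - τ))
    (heq1 : ∀ t, 0 ≤ t →
      p1 t = exp (-l1 * t) * F1 t + ∫ τ in (0:ℝ)..t, l1 * exp (-l1 * τ) * p0 (t - τ)) :
    ∀ t, 0 ≤ t →
      p0 t = exp (-l0 * t) * F0 t
        + l0 * l1 * ∫ τ in (0:ℝ)..t,
            (Bs (t - τ) * exp (-l0 * τ) * F0 τ + Bc (t - τ) * exp (-l1 * τ) * F1 τ) := by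
  intro t ht
  have hf0 : ContinuousOn (fun u => exp (-l0 * u) * F0 u) (Ici 0) := by fun_prop
  have hf1 : ContinuousOn (fun u => exp (-l1 * u) * F1 u) (Ici 0) := by fun_prop
  have hsub : uIcc 0 t ⊆ Ici 0 := uIcc_of_le ht ▸ Icc_subset_Ici_self
  have hvolterra := mul_expConv_eq_of_volterra hf0 hf1 hp0 hp1
    (fun u hu => by rw [heq0 u hu, integral_mul_exp_mul_comp_sub])
    (fun u hu => by rw [heq1 u hu, integral_mul_exp_mul_comp_sub]) ht
  have hkernel := mul_integral_renewalKernel_eq hl1 hl hBs hBc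
    (hf0.mono hsub).intervalIntegrable (hf1.mono hsub).intervalIntegrable
  rw [heq0 t ht, integral_mul_exp_mul_comp_sub, mul_assoc l0 l1]
  congr 2
  exact mul_left_cancel₀ hl (hvolterra.trans hkernel.symm)

/-- Theorem 2.1 (deterministic Volterra form): the renewal representation of the
solution of the coupled Kac–Lévy renewal equations via the matrix kernel `B`. -/
theorem kac_levy_renewal_representation
    (l0 l1 : ℝ) (hl0 : 0 < l0) (hl1 : 0 < l1)
    (F0 F1 p0 p1 : ℝ → ℝ)
    (hF0 : ContinuousOn F0 (Set.Ici 0)) (hF1 : ContinuousOn F1 (Set.Ici 0))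
    (hp0 : ContinuousOn p0 (Set.Ici 0)) (hp1 : ContinuousOn p1 (Set.Ici 0))
    (B00 B01 B10 B11 : ℝ → ℝ)
    (hB00 : ∀ s, B00 s = (1 - Real.exp (-(l0 + l1) * s)) / (l0 + l1))
    (hB01 : ∀ s, B01 s = (1 + (l0 / l1) * Real.exp (-(l0 + l1) * s)) / (l0 + l1))
    (hB10 : ∀ s, B10 s = (1 + (l1 / l0) * Real.exp (-(l0 + l1) * s)) / (l0 + l1))
    (hB11 : ∀ s, B11 s = (1 - Real.exp (-(l0 + l1) * s)) / (l0 + l1))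
    (heq0 : ∀ t, 0 ≤ t →
      p0 t = Real.exp (-l0 * t) * F0 t
        + ∫ τ in (0:ℝ)..t, l0 * Real.exp (-l0 * τ) * p1 (t - τ))
    (heq1 : ∀ t, 0 ≤ t →
      p1 t = Real.exp (-l1 * t) * F1 t
        + ∫ τ in (0:ℝ)..t, l1 * Real.exp (-l1 * τ) * p0 (t - τ)) :
    (∀ t, 0 ≤ t →
      p0 t = Real.exp (-l0 * t) * F0 t
        + l0 * l1 * ∫ τ in (0:ℝ)..t,
            (B00 (t - τ) * Real.exp (-l0 * τ) * F0 τ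
              + B01 (t - τ) * Real.exp (-l1 * τ) * F1 τ)) ∧
    (∀ t, 0 ≤ t →
      p1 t = Real.exp (-l1 * t) * F1 t
        + l0 * l1 * ∫ τ in (0:ℝ)..t,
            (B10 (t - τ) * Real.exp (-l0 * τ) * F0 τ
              + B11 (t - τ) * Real.exp (-l1 * τ) * F1 τ)) := by
  refine ⟨renewal_representation_fst hl1.ne' (by positivity) hF0 hF1 hp0 hp1 hB00 hB01 heq0 heq1,
    fun t ht => ?_⟩
  have hB11' : ∀ s, B11 s = (1 - exp (-(l1 + l0) * s)) / (l1 + l0) := fun s => by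
    rw [hB11, add_comm l0]
  have hB10' : ∀ s, B10 s = (1 + (l1 / l0) * exp (-(l1 + l0) * s)) / (l1 + l0) := fun s => by
    rw [hB10, add_comm l0]
  rw [renewal_representation_fst hl0.ne' (by positivity) hF1 hF0 hp1 hp0 hB11' hB10' heq1 heq0 t ht,
    mul_comm l1 l0]
  congr 2
  exact integral_congr fun τ _ => add_comm _ _
end

section
/- Let λ0, λ1 > 0 with 2λ = λ0 + λ1, and let ψ0, ψ1 ∈ ℂ satisfy λ0 + ψ0 ≠ 0, λ1 + ψ1 ≠ 0, ψ0 ≠ λ1 and ψ1 ≠ λ0. Then for every t ≥ 0: (i) 2λ ∫_0^t B00(t−τ) e^{−τ(λ0+ψ0)} dτ = Φ00(t); (ii) 2λ ∫_0^t B01(t−τ) e^{−τ(λ1+ψ1)} dτ = Φ01(t); (iii) 2λ ∫_0^t B10(t−τ) e^{−τ(λ0+ψ0)} dτ = Φ10(t); (iv) 2λ ∫_0^t B11(t−τ) e^{−τ(λ1+ψ1)} dτ = Φ11(t). -/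
open MeasureTheory intervalIntegral


lemma expint_aux (L a c : ℂ) (ha : a ≠ 0) (hLa : L ≠ a) (t : ℝ) :
    (∫ τ in (0:ℝ)..t, (1 + c * Complex.exp (-L * ((t:ℂ) - τ))) * Complex.exp (-(τ:ℂ) * a))
      = (1 - Complex.exp (-a * t)) / a
        + c * (Complex.exp (-L * t) - Complex.exp (-a * t)) / (a - L) := by
  have h2 : L - a ≠ 0 := sub_ne_zero.mpr hLa
  have heq : ∀ τ : ℝ,
      (1 + c * Complex.exp (-L * ((t:ℂ) - τ))) * Complex.exp (-(τ:ℂ) * a)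
        = Complex.exp ((-a) * τ) + (c * Complex.exp (-L * t)) * Complex.exp ((L - a) * τ) := by
    intro τ
    have e1 : -(τ:ℂ) * a = (-a) * (τ:ℂ) := by ring
    have e2 : -L * ((t:ℂ) - (τ:ℂ)) + -(τ:ℂ) * a = -L * (t:ℂ) + (L - a) * (τ:ℂ) := by ring
    rw [add_mul, one_mul, mul_assoc, ← Complex.exp_add, e2, Complex.exp_add, ← mul_assoc, e1]
  have i1 : IntervalIntegrable (fun τ : ℝ => Complex.exp ((-a) * τ)) volume 0 t :=
    (Complex.continuous_exp.comp (by continuity)).intervalIntegrable _ _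
  have i2 : IntervalIntegrable
      (fun τ : ℝ => (c * Complex.exp (-L * t)) * Complex.exp ((L - a) * τ)) volume 0 t :=
    (continuous_const.mul (Complex.continuous_exp.comp (by continuity))).intervalIntegrable _ _
  rw [intervalIntegral.integral_congr (fun τ _ => heq τ),
    intervalIntegral.integral_add i1 i2, intervalIntegral.integral_const_mul,
    integral_exp_mul_complex (neg_ne_zero.mpr ha), integral_exp_mul_complex h2]
  have hZ : Complex.exp ((L - a) * (t:ℂ)) = Complex.exp (-a * t) / Complex.exp (-L * t) := by
    rw [show (L - a) * (t:ℂ) = -a * t - (-L * t) from by ring, Complex.exp_sub]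
  simp only [Complex.ofReal_zero, mul_zero, Complex.exp_zero, hZ, neg_mul]
  have ha2 : a - L ≠ 0 := sub_ne_zero.mpr (Ne.symm hLa)
  field_simp [ha, ha2, Complex.exp_ne_zero]
  ring

lemma part_aux (l0 l1 : ℝ) (hL : (0:ℝ) < l0 + l1) (a : ℂ) (c : ℝ) (ha : a ≠ 0)
    (hLa : ((l0 + l1 : ℝ) : ℂ) ≠ a) (B : ℝ → ℝ)
    (hB : ∀ s, B s = (1 + c * Real.exp (-(l0 + l1) * s)) / (l0 + l1)) (t : ℝ) :
    (l0 + l1 : ℂ) * ∫ τ in (0:ℝ)..t, (B (t - τ) : ℂ) * Complex.exp (-(τ:ℂ) * a)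
      = (1 - Complex.exp (-a * t)) / a
        + (c : ℂ) * (Complex.exp (-((l0 + l1 : ℝ) : ℂ) * t) - Complex.exp (-a * t))
            / (a - ((l0 + l1 : ℝ) : ℂ)) := by
  have hLne : ((l0 + l1 : ℝ) : ℂ) ≠ 0 := Complex.ofReal_ne_zero.mpr hL.ne'
  have key : ∀ τ : ℝ, (B (t - τ) : ℂ) * Complex.exp (-(τ:ℂ) * a)
      = ((l0 + l1 : ℝ) : ℂ)⁻¹
          * ((1 + (c:ℂ) * Complex.exp (-((l0 + l1 : ℝ) : ℂ) * ((t:ℂ) - τ)))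
              * Complex.exp (-(τ:ℂ) * a)) := by
    intro τ
    rw [hB]
    push_cast
    ring
  rw [intervalIntegral.integral_congr (fun τ _ => key τ),
    intervalIntegral.integral_const_mul, ← mul_assoc]
  rw [show (l0 + l1 : ℂ) = ((l0 + l1 : ℝ) : ℂ) from by push_cast; ring]
  rw [mul_inv_cancel₀ hLne, one_mul, expint_aux _ _ _ ha hLa t]

/-- Theorem 2.2 (computational content): explicit integration of the kernel `B`
against the exponentials `e^{-τ(λᵢ+ψᵢ)}`, giving the functions `Φᵢⱼ`. -/
theorem kac_levy_charfun_integrals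
    (l0 l1 : ℝ) (hl0 : 0 < l0) (hl1 : 0 < l1)
    (ψ0 ψ1 : ℂ)
    (h0 : (l0 : ℂ) + ψ0 ≠ 0) (h1 : (l1 : ℂ) + ψ1 ≠ 0)
    (h2 : ψ0 ≠ (l1 : ℂ)) (h3 : ψ1 ≠ (l0 : ℂ))
    (B00 B01 B10 B11 : ℝ → ℝ)
    (hB00 : ∀ s, B00 s = (1 - Real.exp (-(l0 + l1) * s)) / (l0 + l1))
    (hB01 : ∀ s, B01 s = (1 + (l0 / l1) * Real.exp (-(l0 + l1) * s)) / (l0 + l1))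
    (hB10 : ∀ s, B10 s = (1 + (l1 / l0) * Real.exp (-(l0 + l1) * s)) / (l0 + l1))
    (hB11 : ∀ s, B11 s = (1 - Real.exp (-(l0 + l1) * s)) / (l0 + l1)) :
    ∀ t : ℝ, 0 ≤ t →
      ((l0 + l1 : ℂ) * ∫ τ in (0:ℝ)..t,
          (B00 (t - τ) : ℂ) * Complex.exp (-(τ : ℂ) * ((l0 : ℂ) + ψ0))
        = (1 - Complex.exp (-((l0 : ℂ) + ψ0) * t)) / ((l0 : ℂ) + ψ0)
          - (Complex.exp (-((l0 + l1 : ℝ) : ℂ) * t)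
              - Complex.exp (-((l0 : ℂ) + ψ0) * t)) / (ψ0 - (l1 : ℂ))) ∧
      ((l0 + l1 : ℂ) * ∫ τ in (0:ℝ)..t,
          (B01 (t - τ) : ℂ) * Complex.exp (-(τ : ℂ) * ((l1 : ℂ) + ψ1))
        = (1 - Complex.exp (-((l1 : ℂ) + ψ1) * t)) / ((l1 : ℂ) + ψ1)
          + ((l0 : ℂ) / (l1 : ℂ)) * (Complex.exp (-((l0 + l1 : ℝ) : ℂ) * t)
              - Complex.exp (-((l1 : ℂ) + ψ1) * t)) / (ψ1 - (l0 : ℂ))) ∧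
      ((l0 + l1 : ℂ) * ∫ τ in (0:ℝ)..t,
          (B10 (t - τ) : ℂ) * Complex.exp (-(τ : ℂ) * ((l0 : ℂ) + ψ0))
        = (1 - Complex.exp (-((l0 : ℂ) + ψ0) * t)) / ((l0 : ℂ) + ψ0)
          + ((l1 : ℂ) / (l0 : ℂ)) * (Complex.exp (-((l0 + l1 : ℝ) : ℂ) * t)
              - Complex.exp (-((l0 : ℂ) + ψ0) * t)) / (ψ0 - (l1 : ℂ))) ∧
      ((l0 + l1 : ℂ) * ∫ τ in (0:ℝ)..t,
          (B11 (t - τ) : ℂ) * Complex.exp (-(τ : ℂ) * ((l1 : ℂ) + ψ1))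
        = (1 - Complex.exp (-((l1 : ℂ) + ψ1) * t)) / ((l1 : ℂ) + ψ1)
          - (Complex.exp (-((l0 + l1 : ℝ) : ℂ) * t)
              - Complex.exp (-((l1 : ℂ) + ψ1) * t)) / (ψ1 - (l0 : ℂ))) := by
  intro t _
  have hL : (0:ℝ) < l0 + l1 := by linarith
  have hLa0 : ((l0 + l1 : ℝ) : ℂ) ≠ (l0 : ℂ) + ψ0 := by
    push_cast
    intro h
    exact h2 (by linear_combination -h)
  have hLa1 : ((l0 + l1 : ℝ) : ℂ) ≠ (l1 : ℂ) + ψ1 := by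
    push_cast
    intro h
    exact h3 (by linear_combination -h)
  have hd0 : (l0 : ℂ) + ψ0 - ((l0 + l1 : ℝ) : ℂ) = ψ0 - (l1 : ℂ) := by push_cast; ring
  have hd1 : (l1 : ℂ) + ψ1 - ((l0 + l1 : ℝ) : ℂ) = ψ1 - (l0 : ℂ) := by push_cast; ring
  refine ⟨?_, ?_, ?_, ?_⟩
  · rw [part_aux l0 l1 hL _ (-1) h0 hLa0 B00 (fun s => by rw [hB00]; ring) t, hd0]
    push_cast
    ring
  · rw [part_aux l0 l1 hL _ (l0 / l1) h1 hLa1 B01 (fun s => hB01 s) t, hd1]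
    push_cast
    ring
  · rw [part_aux l0 l1 hL _ (l1 / l0) h0 hLa0 B10 (fun s => hB10 s) t, hd0]
    push_cast
    ring
  · rw [part_aux l0 l1 hL _ (-1) h1 hLa1 B11 (fun s => by rw [hB11]; ring) t, hd1]
    push_cast
    ring
end

section
/- Let λ0, λ1 > 0 with 2λ = λ0 + λ1, and let ψ0, ψ1 ∈ ℂ with Re ψ0 ≥ 0, Re ψ1 ≥ 0, ψ0 ≠ λ1 and ψ1 ≠ λ0, and let ĝ0, ĝ1 ∈ ℂ. Define Φ0(t) = e^{−t(λ0+ψ0)} ĝ0 + (λ0 λ1/(2λ)) (Φ00(t) ĝ0 + Φ01(t) ĝ1) and Φ1(t) = e^{−t(λ1+ψ1)} ĝ1 + (λ0 λ1/(2λ)) (Φ10(t) ĝ0 + Φ11(t) ĝ1). Then as t → ∞ both Φ0(t) and Φ1(t) converge to Φ∞ := (λ0 λ1/(λ0+λ1)) ( ĝ0/(λ0+ψ0) + ĝ1/(λ1+ψ1) ). -/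
open Filter Topology

/-!
Every transient term of `Φ0`, `Φ1` is a multiple of `exp (-c t)` with `0 < re c`: the rates are
`λ0 + ψ0`, `λ1 + ψ1` and `λ0 + λ1`. These all vanish as `t → ∞`, so `Φ00, Φ10 → 1 / (λ0 + ψ0)`
and `Φ01, Φ11 → 1 / (λ1 + ψ1)`, and both `Φ0` and `Φ1` converge to `Φ∞`.
-/

lemma Complex.tendsto_exp_neg_mul_atTop {c : ℂ} (hc : 0 < c.re) :
    Tendsto (fun t : ℝ => Complex.exp (-c * t)) atTop (𝓝 0) := by
  simpa [Complex.tendsto_exp_nhds_zero_iff] using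
    (tendsto_const_nhds (x := -c.re)).neg_mul_atTop (neg_lt_zero.mpr hc) tendsto_id

lemma tendsto_one_sub_exp_div_add_exp_sub_exp {a b : ℂ} (ha : 0 < a.re) (hb : 0 < b.re)
    (c d : ℂ) :
    Tendsto (fun t : ℝ => (1 - Complex.exp (-a * t)) / a
        + c * (Complex.exp (-b * t) - Complex.exp (-a * t)) / d) atTop (𝓝 a⁻¹) := by
  have hEa := Complex.tendsto_exp_neg_mul_atTop ha
  have hEb := Complex.tendsto_exp_neg_mul_atTop hb
  simpa using ((tendsto_const_nhds (x := (1 : ℂ)).sub hEa).div_const a).add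
    (((hEb.sub hEa).const_mul c).div_const d)

theorem kac_levy_renewal_limit_general
    (l0 l1 : ℝ) (hl0 : 0 < l0) (hl1 : 0 < l1)
    (ψ0 ψ1 : ℂ) (hψ0 : 0 ≤ ψ0.re) (hψ1 : 0 ≤ ψ1.re)
    (g0 g1 : ℂ)
    (Φ00 Φ01 Φ10 Φ11 Φ0 Φ1 : ℝ → ℂ)
    (hΦ00 : ∀ t, Φ00 t =
      (1 - Complex.exp (-((l0 : ℂ) + ψ0) * t)) / ((l0 : ℂ) + ψ0)
        - (Complex.exp (-((l0 + l1 : ℝ) : ℂ) * t)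
            - Complex.exp (-((l0 : ℂ) + ψ0) * t)) / (ψ0 - (l1 : ℂ)))
    (hΦ01 : ∀ t, Φ01 t =
      (1 - Complex.exp (-((l1 : ℂ) + ψ1) * t)) / ((l1 : ℂ) + ψ1)
        + ((l0 : ℂ) / (l1 : ℂ)) * (Complex.exp (-((l0 + l1 : ℝ) : ℂ) * t)
            - Complex.exp (-((l1 : ℂ) + ψ1) * t)) / (ψ1 - (l0 : ℂ)))
    (hΦ10 : ∀ t, Φ10 t =
      (1 - Complex.exp (-((l0 : ℂ) + ψ0) * t)) / ((l0 : ℂ) + ψ0)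
        + ((l1 : ℂ) / (l0 : ℂ)) * (Complex.exp (-((l0 + l1 : ℝ) : ℂ) * t)
            - Complex.exp (-((l0 : ℂ) + ψ0) * t)) / (ψ0 - (l1 : ℂ)))
    (hΦ11 : ∀ t, Φ11 t =
      (1 - Complex.exp (-((l1 : ℂ) + ψ1) * t)) / ((l1 : ℂ) + ψ1)
        - (Complex.exp (-((l0 + l1 : ℝ) : ℂ) * t)
            - Complex.exp (-((l1 : ℂ) + ψ1) * t)) / (ψ1 - (l0 : ℂ)))
    (hΦ0 : ∀ t, Φ0 t =
      Complex.exp (-(t : ℂ) * ((l0 : ℂ) + ψ0)) * g0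
        + ((l0 * l1 : ℝ) : ℂ) / ((l0 + l1 : ℝ) : ℂ) * (Φ00 t * g0 + Φ01 t * g1))
    (hΦ1 : ∀ t, Φ1 t =
      Complex.exp (-(t : ℂ) * ((l1 : ℂ) + ψ1)) * g1
        + ((l0 * l1 : ℝ) : ℂ) / ((l0 + l1 : ℝ) : ℂ) * (Φ10 t * g0 + Φ11 t * g1)) :
    Tendsto Φ0 atTop (𝓝 (((l0 * l1 : ℝ) : ℂ) / ((l0 + l1 : ℝ) : ℂ)
        * (g0 / ((l0 : ℂ) + ψ0) + g1 / ((l1 : ℂ) + ψ1)))) ∧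
    Tendsto Φ1 atTop (𝓝 (((l0 * l1 : ℝ) : ℂ) / ((l0 + l1 : ℝ) : ℂ)
        * (g0 / ((l0 : ℂ) + ψ0) + g1 / ((l1 : ℂ) + ψ1)))) := by
  set A : ℂ := (l0 : ℂ) + ψ0
  set B : ℂ := (l1 : ℂ) + ψ1
  set K : ℂ := ((l0 * l1 : ℝ) : ℂ) / ((l0 + l1 : ℝ) : ℂ)
  have hA : 0 < A.re := by simp [A]; linarith
  have hB : 0 < B.re := by simp [B]; linarith
  have hS : 0 < (((l0 + l1 : ℝ) : ℂ)).re := by simp; linarith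
  have decay {c : ℂ} (hc : 0 < c.re) :
      Tendsto (fun t : ℝ => Complex.exp (-(t : ℂ) * c)) atTop (𝓝 0) :=
    (Complex.tendsto_exp_neg_mul_atTop hc).congr fun t => by ring_nf
  have limit {E F G : ℝ → ℂ} (g : ℂ) (hE : Tendsto E atTop (𝓝 0))
      (hF : Tendsto F atTop (𝓝 A⁻¹)) (hG : Tendsto G atTop (𝓝 B⁻¹)) :
      Tendsto (fun t => E t * g + K * (F t * g0 + G t * g1)) atTop
        (𝓝 (K * (g0 / A + g1 / B))) := by
    simpa [div_eq_inv_mul] using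
      (hE.mul_const g).add (((hF.mul_const g0).add (hG.mul_const g1)).const_mul K)
  rw [show Φ0 = _ from funext hΦ0, show Φ1 = _ from funext hΦ1]
  exact ⟨limit g0 (decay hA)
      ((tendsto_one_sub_exp_div_add_exp_sub_exp hA hS (-1) (ψ0 - l1)).congr fun t => by
        rw [hΦ00 t]; ring)
      ((tendsto_one_sub_exp_div_add_exp_sub_exp hB hS _ _).congr fun t => (hΦ01 t).symm),
    limit g1 (decay hB)
      ((tendsto_one_sub_exp_div_add_exp_sub_exp hA hS _ _).congr fun t => (hΦ10 t).symm)
      ((tendsto_one_sub_exp_div_add_exp_sub_exp hB hS (-1) (ψ1 - l0)).congr fun t => by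
        rw [hΦ11 t]; ring)⟩

/-- Theorem 2.3 (analytic content): convergence of the characteristic functions
`Φ0(t), Φ1(t)` of the Kac–Lévy process with renewal starting points, as `t → ∞`,
to the Fourier transform `Φ∞` of the limiting mixture distribution. -/
theorem kac_levy_renewal_limit
    (l0 l1 : ℝ) (hl0 : 0 < l0) (hl1 : 0 < l1)
    (ψ0 ψ1 : ℂ) (hψ0 : 0 ≤ ψ0.re) (hψ1 : 0 ≤ ψ1.re)
    (h2 : ψ0 ≠ (l1 : ℂ)) (h3 : ψ1 ≠ (l0 : ℂ))
    (g0 g1 : ℂ)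
    (Φ00 Φ01 Φ10 Φ11 Φ0 Φ1 : ℝ → ℂ)
    (hΦ00 : ∀ t, Φ00 t =
      (1 - Complex.exp (-((l0 : ℂ) + ψ0) * t)) / ((l0 : ℂ) + ψ0)
        - (Complex.exp (-((l0 + l1 : ℝ) : ℂ) * t)
            - Complex.exp (-((l0 : ℂ) + ψ0) * t)) / (ψ0 - (l1 : ℂ)))
    (hΦ01 : ∀ t, Φ01 t =
      (1 - Complex.exp (-((l1 : ℂ) + ψ1) * t)) / ((l1 : ℂ) + ψ1)
        + ((l0 : ℂ) / (l1 : ℂ)) * (Complex.exp (-((l0 + l1 : ℝ) : ℂ) * t)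
            - Complex.exp (-((l1 : ℂ) + ψ1) * t)) / (ψ1 - (l0 : ℂ)))
    (hΦ10 : ∀ t, Φ10 t =
      (1 - Complex.exp (-((l0 : ℂ) + ψ0) * t)) / ((l0 : ℂ) + ψ0)
        + ((l1 : ℂ) / (l0 : ℂ)) * (Complex.exp (-((l0 + l1 : ℝ) : ℂ) * t)
            - Complex.exp (-((l0 : ℂ) + ψ0) * t)) / (ψ0 - (l1 : ℂ)))
    (hΦ11 : ∀ t, Φ11 t =
      (1 - Complex.exp (-((l1 : ℂ) + ψ1) * t)) / ((l1 : ℂ) + ψ1)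
        - (Complex.exp (-((l0 + l1 : ℝ) : ℂ) * t)
            - Complex.exp (-((l1 : ℂ) + ψ1) * t)) / (ψ1 - (l0 : ℂ)))
    (hΦ0 : ∀ t, Φ0 t =
      Complex.exp (-(t : ℂ) * ((l0 : ℂ) + ψ0)) * g0
        + ((l0 * l1 : ℝ) : ℂ) / ((l0 + l1 : ℝ) : ℂ) * (Φ00 t * g0 + Φ01 t * g1))
    (hΦ1 : ∀ t, Φ1 t =
      Complex.exp (-(t : ℂ) * ((l1 : ℂ) + ψ1)) * g1
        + ((l0 * l1 : ℝ) : ℂ) / ((l0 + l1 : ℝ) : ℂ) * (Φ10 t * g0 + Φ11 t * g1)) :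
    Tendsto Φ0 atTop (𝓝 (((l0 * l1 : ℝ) : ℂ) / ((l0 + l1 : ℝ) : ℂ)
        * (g0 / ((l0 : ℂ) + ψ0) + g1 / ((l1 : ℂ) + ψ1)))) ∧
    Tendsto Φ1 atTop (𝓝 (((l0 * l1 : ℝ) : ℂ) / ((l0 + l1 : ℝ) : ℂ)
        * (g0 / ((l0 : ℂ) + ψ0) + g1 / ((l1 : ℂ) + ψ1)))) :=
  kac_levy_renewal_limit_general l0 l1 hl0 hl1 ψ0 ψ1 hψ0 hψ1 g0 g1 Φ00 Φ01 Φ10 Φ11 Φ0 Φ1 hΦ00 hΦ01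
    hΦ10 hΦ11 hΦ0 hΦ1
end

section
/- Let a, λ, ν > 0, c ≠ 0, D = (a c + ν + λ)² − 4 a c λ, α1 = (a c + ν + λ − √D)/(2c), α2 = (a c + ν + λ + √D)/(2c), A1 = (a − α1)/√D, A2 = (α2 − a)/√D. Define F : ℝ → ℝ by: if c > 0, F(x) = (A1 e^{−α1 x} + A2 e^{−α2 x}) 1_{x>0}; if c < 0, F(x) = A1 e^{−α1 x} 1_{x>0} − A2 e^{−α2 x} 1_{x<0}. Then for every θ ∈ ℝ, ∫_ℝ e^{iθx} F(x) dx = (a − iθ)/(a λ − iθ(a c + ν + λ) − c θ²). -/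
/-!
On `x > 0` the integrand is a combination of `exp ((iθ - αⱼ) x)`, whose integral over `(0, ∞)` is
`(αⱼ - iθ)⁻¹` when `αⱼ > 0`. For `c < 0` the root `α₂` is negative, and `-exp ((iθ - α₂) x)` over
`(-∞, 0)` again integrates to `(α₂ - iθ)⁻¹`, so in both cases the transform is
`A₁ / (α₁ - iθ) + A₂ / (α₂ - iθ)`. Since `α₁, α₂` are the roots of `c z² - (ac + ν + λ) z + aλ`
and `√D = c (α₂ - α₁)`, this is the partial-fraction decomposition of the claimed rational function.
-/

open MeasureTheory Set Complex

lemma cexp_mul_ofReal_exp_neg (θ α x : ℝ) :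
    cexp (I * θ * x) * (Real.exp (-α * x) : ℂ) = cexp ((I * θ - α) * x) := by
  push_cast
  rw [← Complex.exp_add]
  ring_nf

lemma integrableOn_Ioi_cexp_mul_exp_neg {α : ℝ} (hα : 0 < α) (θ : ℝ) :
    IntegrableOn (fun x : ℝ => cexp (I * θ * x) * (Real.exp (-α * x) : ℂ)) (Ioi 0) := by
  simp_rw [cexp_mul_ofReal_exp_neg]
  exact integrableOn_exp_mul_complex_Ioi (by simpa using hα) 0

lemma integral_Ioi_cexp_mul_exp_neg {α : ℝ} (hα : 0 < α) (θ : ℝ) :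
    ∫ x : ℝ in Ioi 0, cexp (I * θ * x) * (Real.exp (-α * x) : ℂ) = ((α : ℂ) - I * θ)⁻¹ := by
  simp_rw [cexp_mul_ofReal_exp_neg]
  rw [integral_exp_mul_complex_Ioi (by simpa using hα), ofReal_zero, mul_zero, Complex.exp_zero,
    ← neg_sub (α : ℂ), div_neg, neg_div, neg_neg, one_div]

lemma integrableOn_Iio_cexp_mul_exp_neg {α : ℝ} (hα : α < 0) (θ : ℝ) :
    IntegrableOn (fun x : ℝ => cexp (I * θ * x) * (Real.exp (-α * x) : ℂ)) (Iio 0) := by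
  simp_rw [cexp_mul_ofReal_exp_neg]
  exact (integrableOn_exp_mul_complex_Iic (by simpa using hα) 0).mono_set Iio_subset_Iic_self

lemma integral_Iio_cexp_mul_exp_neg {α : ℝ} (hα : α < 0) (θ : ℝ) :
    ∫ x : ℝ in Iio 0, cexp (I * θ * x) * (Real.exp (-α * x) : ℂ) = -((α : ℂ) - I * θ)⁻¹ := by
  simp_rw [← integral_Iic_eq_integral_Iio, cexp_mul_ofReal_exp_neg]
  rw [integral_exp_mul_complex_Iic (by simpa using hα), ofReal_zero, mul_zero, Complex.exp_zero,
    ← neg_sub (α : ℂ), one_div, inv_neg]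

lemma integral_cexp_mul_eq_of_one_sided {α β A B : ℝ} (hα : 0 < α) (hβ : 0 < β) {F : ℝ → ℝ}
    (hF : ∀ x, F x = if 0 < x then A * Real.exp (-α * x) + B * Real.exp (-β * x) else 0)
    (θ : ℝ) :
    ∫ x : ℝ, cexp (I * θ * x) * (F x : ℂ) = A * ((α : ℂ) - I * θ)⁻¹ + B * ((β : ℂ) - I * θ)⁻¹ := by
  have hsplit : (fun x : ℝ => cexp (I * θ * x) * (F x : ℂ)) = (Ioi 0).indicator (fun x : ℝ =>
      A * (cexp (I * θ * x) * (Real.exp (-α * x) : ℂ))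
        + B * (cexp (I * θ * x) * (Real.exp (-β * x) : ℂ))) := by
    funext x
    simp only [hF, indicator, mem_Ioi]
    split_ifs <;> push_cast <;> ring
  rw [hsplit, integral_indicator measurableSet_Ioi,
    integral_add ((integrableOn_Ioi_cexp_mul_exp_neg hα θ).const_mul _)
      ((integrableOn_Ioi_cexp_mul_exp_neg hβ θ).const_mul _),
    integral_const_mul, integral_const_mul, integral_Ioi_cexp_mul_exp_neg hα,
    integral_Ioi_cexp_mul_exp_neg hβ]

lemma integral_cexp_mul_eq_of_two_sided {α β A B : ℝ} (hα : 0 < α) (hβ : β < 0) {F : ℝ → ℝ}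
    (hF : ∀ x, F x = (if 0 < x then A * Real.exp (-α * x) else 0)
      - (if x < 0 then B * Real.exp (-β * x) else 0))
    (θ : ℝ) :
    ∫ x : ℝ, cexp (I * θ * x) * (F x : ℂ) = A * ((α : ℂ) - I * θ)⁻¹ + B * ((β : ℂ) - I * θ)⁻¹ := by
  have hsplit : (fun x : ℝ => cexp (I * θ * x) * (F x : ℂ))
      = fun x => (Ioi 0).indicator (fun x : ℝ => A * (cexp (I * θ * x) * (Real.exp (-α * x) : ℂ))) x
        - (Iio 0).indicator (fun x : ℝ => B * (cexp (I * θ * x) * (Real.exp (-β * x) : ℂ))) x := by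
    funext x
    simp only [hF, indicator, mem_Ioi, mem_Iio]
    split_ifs <;> push_cast <;> ring
  have hA := (integrableOn_Ioi_cexp_mul_exp_neg hα θ).const_mul (A : ℂ)
  have hB := (integrableOn_Iio_cexp_mul_exp_neg hβ θ).const_mul (B : ℂ)
  rw [hsplit, integral_sub ((integrable_indicator_iff measurableSet_Ioi).2 hA)
      ((integrable_indicator_iff measurableSet_Iio).2 hB),
    integral_indicator measurableSet_Ioi, integral_indicator measurableSet_Iio,
    integral_const_mul, integral_const_mul, integral_Ioi_cexp_mul_exp_neg hα,
    integral_Iio_cexp_mul_exp_neg hβ]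
  ring

lemma discriminant_pos {a lam ν c : ℝ} (ha : 0 < a) (hlam : 0 < lam) (hν : 0 < ν) (hc : c ≠ 0) :
    0 < (a * c + ν + lam) ^ 2 - 4 * a * c * lam := by
  rcases hc.lt_or_gt with hc | hc
  · nlinarith [sq_nonneg (a * c + ν + lam), mul_pos (mul_pos ha hlam) (neg_pos.2 hc)]
  · nlinarith [sq_nonneg (a * c - lam), mul_pos ha hc]

lemma vieta_of_quadratic_formula {K : Type*} [Field K] [NeZero (2 : K)] {c p q s α β : K}
    (hc : c ≠ 0) (hs : s ^ 2 = p ^ 2 - 4 * c * q) (hα : α = (p - s) / (2 * c))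
    (hβ : β = (p + s) / (2 * c)) :
    c * (α + β) = p ∧ c * (α * β) = q ∧ c * (β - α) = s := by
  subst hα hβ
  exact ⟨by field_simp; ring, by field_simp; linear_combination -hs, by field_simp; ring⟩

lemma pos_and_pos_of_vieta {c p q α β : ℝ} (hc : 0 < c) (hp : 0 < p) (hq : 0 < q)
    (hsum : c * (α + β) = p) (hprod : c * (α * β) = q) : 0 < α ∧ 0 < β := by
  have hsum' : 0 < α + β := pos_of_mul_pos_right (hsum ▸ hp) hc.le
  have hprod' : 0 < α * β := pos_of_mul_pos_right (hprod ▸ hq) hc.le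
  constructor <;> nlinarith

lemma pos_and_neg_of_vieta {c q s α β : ℝ} (hc : c < 0) (hq : 0 < q) (hs : 0 < s)
    (hprod : c * (α * β) = q) (hdiff : c * (β - α) = s) : 0 < α ∧ β < 0 := by
  have hprod' : α * β < 0 := neg_of_mul_pos_right (hprod ▸ hq) hc.le
  have hlt : β < α := by nlinarith
  constructor <;> nlinarith

lemma ofReal_sub_I_mul_ne_zero {α : ℝ} (hα : α ≠ 0) (θ : ℝ) : (α : ℂ) - I * θ ≠ 0 :=
  fun h => hα (by simpa using congrArg re h)

lemma add_div_sub_eq_div_mul_sub_mul_sub {K : Type*} [Field K] {a c s α β z : K} (hs : s ≠ 0)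
    (hcs : c * (β - α) = s) (hα : α - z ≠ 0) (hβ : β - z ≠ 0) :
    (a - α) / s * (α - z)⁻¹ + (β - a) / s * (β - z)⁻¹ = (a - z) / (c * ((α - z) * (β - z))) := by
  have hc : c ≠ 0 := left_ne_zero_of_mul (hcs ▸ hs)
  field_simp
  linear_combination (a - z) * hcs

/-- Example 2.3: inverse Fourier transform of
`θ ↦ (a − iθ)/(aλ − iθ(ac+ν+λ) − cθ²)` in the two cases `c > 0` and `c < 0`. -/
theorem fourier_compound_poisson_mixture
    (a lam ν c : ℝ) (ha : 0 < a) (hlam : 0 < lam) (hν : 0 < ν) (hc : c ≠ 0)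
    (D α1 α2 A1 A2 : ℝ)
    (hD : D = (a * c + ν + lam) ^ 2 - 4 * a * c * lam)
    (hα1 : α1 = (a * c + ν + lam - Real.sqrt D) / (2 * c))
    (hα2 : α2 = (a * c + ν + lam + Real.sqrt D) / (2 * c))
    (hA1 : A1 = (a - α1) / Real.sqrt D)
    (hA2 : A2 = (α2 - a) / Real.sqrt D)
    (F : ℝ → ℝ)
    (hFpos : 0 < c → ∀ x, F x =
      if 0 < x then A1 * Real.exp (-α1 * x) + A2 * Real.exp (-α2 * x) else 0)
    (hFneg : c < 0 → ∀ x, F x =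
      (if 0 < x then A1 * Real.exp (-α1 * x) else 0)
        - (if x < 0 then A2 * Real.exp (-α2 * x) else 0)) :
    ∀ θ : ℝ, ∫ x : ℝ, Complex.exp (Complex.I * θ * x) * (F x : ℂ)
      = ((a : ℂ) - Complex.I * θ)
        / ((a * lam : ℝ) - Complex.I * θ * ((a * c + ν + lam : ℝ) : ℂ)
            - (c : ℂ) * θ ^ 2) := by
  intro θ
  have hDpos : 0 < D := hD ▸ discriminant_pos ha hlam hν hc
  have hsqrt : 0 < Real.sqrt D := Real.sqrt_pos.2 hDpos
  obtain ⟨hsum, hprod, hdiff⟩ := vieta_of_quadratic_formula (q := a * lam) hc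
    (by rw [Real.sq_sqrt hDpos.le, hD]; ring) hα1 hα2
  have hintegral : ∫ x : ℝ, cexp (I * θ * x) * (F x : ℂ)
      = A1 * ((α1 : ℂ) - I * θ)⁻¹ + A2 * ((α2 : ℂ) - I * θ)⁻¹ := by
    rcases hc.lt_or_gt with hneg | hpos
    · obtain ⟨h1, h2⟩ := pos_and_neg_of_vieta hneg (mul_pos ha hlam) hsqrt hprod hdiff
      exact integral_cexp_mul_eq_of_two_sided h1 h2 (hFneg hneg) θ
    · obtain ⟨h1, h2⟩ := pos_and_pos_of_vieta hpos (by positivity) (mul_pos ha hlam) hsum hprod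
      exact integral_cexp_mul_eq_of_one_sided h1 h2 (hFpos hpos) θ
  obtain ⟨hα1ne, hα2ne⟩ :=
    mul_ne_zero_iff.1 (right_ne_zero_of_mul (hprod ▸ (mul_pos ha hlam).ne'))
  have hden : ((a * lam : ℝ) : ℂ) - I * θ * ((a * c + ν + lam : ℝ) : ℂ) - (c : ℂ) * θ ^ 2
      = c * (((α1 : ℂ) - I * θ) * ((α2 : ℂ) - I * θ)) := by
    rw [← hsum, ← hprod]
    push_cast
    linear_combination -(c : ℂ) * θ ^ 2 * I_sq
  rw [hintegral, hden, hA1, hA2]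
  push_cast
  exact add_div_sub_eq_div_mul_sub_mul_sub (by exact_mod_cast hsqrt.ne')
    (by exact_mod_cast hdiff) (ofReal_sub_I_mul_ne_zero hα1ne θ) (ofReal_sub_I_mul_ne_zero hα2ne θ)
end

section
/- Let λ0, λ1 > 0, ℓ0, ℓ1 ∈ ℝ and h0, h1 > 0. Set λ = (λ0+λ1)/2, μ = (λ0−λ1)/2, ℓ = (ℓ0+ℓ1)/2, m = (ℓ0−ℓ1)/2, D = √((m+μ)² + λ0 λ1 h0 h1) (which is strictly positive), and let 𝓛 be the 2×2 real matrix with rows (λ0+ℓ0, −λ0 h0) and (−λ1 h1, λ1+ℓ1). Then for every t ≥ 0 the vector exp(−t 𝓛) · (1,1)ᵀ has first component ½ e^{−(λ+ℓ)t} [ e^{tD} + e^{−tD} + ((λ0 h0 − μ − m)/D)(e^{tD} − e^{−tD}) ] and second component ½ e^{−(λ+ℓ)t} [ e^{tD} + e^{−tD} + ((λ1 h1 + μ + m)/D)(e^{tD} − e^{−tD}) ]. -/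
/-!
Write `-𝓛 = -(λ + ℓ) • 1 + N` with `N = !![-(m + μ), λ₀h₀; λ₁h₁, m + μ]`. The matrix `N` is
traceless, so by Cayley–Hamilton `N * N = D² • 1`; splitting the exponential series of `t • N`
into even and odd powers gives `exp (t • N) = cosh (tD) • 1 + (sinh (tD) / D) • N`. The scalar
part commutes with `N` and contributes the factor `e^{-(λ + ℓ)t}`.
-/

open Matrix NormedSpace

section BanachAlgebra

variable {A : Type*} [NormedRing A] [NormedAlgebra ℝ A] [CompleteSpace A]

theorem exp_smul_one_add (c : ℝ) (x : A) : exp (c • (1 : A) + x) = Real.exp c • exp x := by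
  let +nondep : NormedAlgebra ℚ A := .restrictScalars ℚ ℝ A
  rw [exp_add_of_commute ((Commute.one_left x).smul_left c), ← Algebra.algebraMap_eq_smul_one,
    ← algebraMap_exp_comm, Real.exp_eq_exp_ℝ, Algebra.smul_def]

theorem exp_smul_of_mul_self_eq_smul_one {a : A} {D : ℝ} (hD : D ≠ 0)
    (ha : a * a = D ^ 2 • (1 : A)) (t : ℝ) :
    exp (t • a) = Real.cosh (t * D) • (1 : A) + (Real.sinh (t * D) / D) • a := by
  have pow_even (n : ℕ) : (t • a) ^ (2 * n) = (t * D) ^ (2 * n) • (1 : A) := by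
    rw [pow_mul, sq, smul_mul_smul, ha, smul_smul, smul_pow, one_pow, pow_mul]
    ring_nf
  have pow_odd (n : ℕ) : (t • a) ^ (2 * n + 1) = ((t * D) ^ (2 * n + 1) / D) • a := by
    rw [pow_succ, pow_even, smul_mul_smul, one_mul]
    congr 1
    field_simp
    ring
  refine (exp_series_hasSum_exp' (𝕂 := ℝ) (t • a)).unique (HasSum.even_add_odd ?_ ?_)
  · convert (Real.hasSum_cosh (t * D)).smul_const (1 : A) using 2 with n
    rw [pow_even, smul_smul, div_eq_inv_mul]
  · convert ((Real.hasSum_sinh (t * D)).div_const D).smul_const a using 2 with n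
    rw [pow_odd, smul_smul]
    ring_nf

end BanachAlgebra

theorem Matrix.traceless_fin_two_mul_self (α β γ : ℝ) :
    !![-α, β; γ, α] * !![-α, β; γ, α] = (α ^ 2 + β * γ) • (1 : Matrix (Fin 2) (Fin 2) ℝ) := by
  ext i j
  fin_cases i <;> fin_cases j <;> simp [mul_apply, Fin.sum_univ_two] <;> ring

/-- Theorem 3.1 (computational content): explicit formula for `exp(−t𝓛)·(1,1)ᵀ`,
the Laplace transform of a Kac–Lévy process with jumps. -/
theorem kac_levy_jump_laplace_transform
    (l0 l1 e0 e1 h0 h1 : ℝ) (hl0 : 0 < l0) (hl1 : 0 < l1)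
    (hh0 : 0 < h0) (hh1 : 0 < h1)
    (lam μ e m D : ℝ)
    (hlam : lam = (l0 + l1) / 2) (hμ : μ = (l0 - l1) / 2)
    (he : e = (e0 + e1) / 2) (hm : m = (e0 - e1) / 2)
    (hD : D = Real.sqrt ((m + μ) ^ 2 + l0 * l1 * h0 * h1))
    (L : Matrix (Fin 2) (Fin 2) ℝ)
    (hL : L = !![l0 + e0, -(l0 * h0); -(l1 * h1), l1 + e1]) :
    0 < D ∧
    ∀ t : ℝ, 0 ≤ t →
      (NormedSpace.exp (-(t • L))).mulVec ![1, 1]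
        = ![ (1 / 2) * Real.exp (-(lam + e) * t) *
              (Real.exp (t * D) + Real.exp (-(t * D))
                + ((l0 * h0 - μ - m) / D)
                    * (Real.exp (t * D) - Real.exp (-(t * D)))),
             (1 / 2) * Real.exp (-(lam + e) * t) *
              (Real.exp (t * D) + Real.exp (-(t * D))
                + ((l1 * h1 + μ + m) / D)
                    * (Real.exp (t * D) - Real.exp (-(t * D)))) ] := by
  have hDsq : 0 < (m + μ) ^ 2 + l0 * l1 * h0 * h1 := by positivity
  have hDpos : 0 < D := hD ▸ Real.sqrt_pos.mpr hDsq
  refine ⟨hDpos, fun t _ => ?_⟩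
  let N : Matrix (Fin 2) (Fin 2) ℝ := !![-(m + μ), l0 * h0; l1 * h1, m + μ]
  have hN : N * N = D ^ 2 • (1 : Matrix (Fin 2) (Fin 2) ℝ) := by
    rw [Matrix.traceless_fin_two_mul_self, hD, Real.sq_sqrt hDsq.le]
    ring_nf
  have hsplit : -(t • L) = (-(lam + e) * t) • 1 + t • N := by
    subst hL hlam he hμ hm
    ext i j
    fin_cases i <;> fin_cases j <;> simp [N] <;> ring
  have hexp : exp (-(t • L)) =
      Real.exp (-(lam + e) * t) • (Real.cosh (t * D) • 1 + (Real.sinh (t * D) / D) • N) := by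
    open scoped Norms.Operator in
    rw [hsplit]
    -- `exact`, not `rw`: the operator-norm instances agree with the matrix ones only up to unfolding
    exact (exp_smul_one_add _ _).trans
      (congrArg _ (exp_smul_of_mul_self_eq_smul_one hDpos.ne' hN t))
  rw [hexp]
  ext i
  fin_cases i <;> simp [N, mulVec, dotProduct, Fin.sum_univ_two, Real.cosh_eq, Real.sinh_eq] <;>
    ring
end

section
/- Let λ0, λ1 > 0, ℓ0, ℓ1 ∈ ℝ and h0, h1 > 0, and set λ = (λ0+λ1)/2, μ = (λ0−λ1)/2, ℓ = (ℓ0+ℓ1)/2, m = (ℓ0−ℓ1)/2, D = √((m+μ)² + λ0 λ1 h0 h1) > 0. Define L0(t) = ½ e^{−(λ+ℓ)t} [ e^{tD} + e^{−tD} + ((λ0 h0 − μ − m)/D)(e^{tD} − e^{−tD}) ] and L1(t) = ½ e^{−(λ+ℓ)t} [ e^{tD} + e^{−tD} + ((λ1 h1 + μ + m)/D)(e^{tD} − e^{−tD}) ]. Then for all t ≥ 0: L0(t) = e^{−(λ0+ℓ0)t} + λ0 h0 ∫_0^t e^{−(λ0+ℓ0)τ} L1(t−τ) dτ and L1(t)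 = e^{−(λ1+ℓ1)t} + λ1 h1 ∫_0^t e^{−(λ1+ℓ1)τ} L0(t−τ) dτ. -/
/-!
By variation of constants, any `L` with `L' = P M - a L` satisfies
`L t = e^{-a t} L 0 + P ∫₀ᵗ e^{-a τ} M (t - τ) dτ`. Both `L₀` and `L₁` equal `1` at `0`, so it
suffices that `L₀' = λ₀ h₀ L₁ - (λ₀ + ℓ₀) L₀` and `L₁' = λ₁ h₁ L₀ - (λ₁ + ℓ₁) L₁`. Writing
`L₀, L₁` as `e^{-(λ + ℓ) t} (cosh (t D) + c sinh (t D))`, this reduces to identities between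
the coefficients `c`, which hold because `D² = (m + μ)² + λ₀ h₀ λ₁ h₁`.
-/
open intervalIntegral Real

theorem eq_exp_mul_add_integral_of_hasDerivAt {L g : ℝ → ℝ} {a : ℝ} (hg : Continuous g)
    (hL : ∀ t, HasDerivAt L (g t - a * L t) t) (t : ℝ) :
    L t = exp (-a * t) * L 0 + ∫ τ in (0:ℝ)..t, exp (-a * τ) * g (t - τ) := by
  have hF : ∀ u, HasDerivAt (fun u => exp (a * u) * L u) (exp (a * u) * g u) u := by
    intro u
    have hlin : HasDerivAt (fun u => a * u) a u := by
      simpa using (hasDerivAt_id u).const_mul a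
    exact (hlin.exp.mul (hL u)).congr_deriv (by ring)
  have hFTC : ∫ u in (0:ℝ)..t, exp (a * u) * g u = exp (a * t) * L t - L 0 := by
    simpa using integral_eq_sub_of_hasDerivAt (fun u _ => hF u)
      ((by fun_prop : Continuous fun u => exp (a * u) * g u).intervalIntegrable 0 t)
  have hshift : ∫ τ in (0:ℝ)..t, exp (-a * τ) * g (t - τ)
      = exp (-a * t) * ∫ u in (0:ℝ)..t, exp (a * u) * g u := by
    calc _ = ∫ τ in (0:ℝ)..t, exp (-a * t) * (exp (a * (t - τ)) * g (t - τ)) :=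
          integral_congr fun τ _ => by rw [← mul_assoc, ← exp_add]; ring_nf
      _ = ∫ u in (0:ℝ)..t, exp (-a * t) * (exp (a * u) * g u) := by
          simpa using integral_comp_sub_left
            (fun u => exp (-a * t) * (exp (a * u) * g u)) t (a := 0) (b := t)
      _ = exp (-a * t) * ∫ u in (0:ℝ)..t, exp (a * u) * g u := integral_const_mul _ _
  rw [hshift, hFTC, mul_sub, ← mul_assoc, ← exp_add]
  simp

noncomputable def dampedCoshSinh (k D c t : ℝ) : ℝ :=
  exp (-k * t) * (cosh (t * D) + c * sinh (t * D))

theorem dampedCoshSinh_eq (k D c t : ℝ) :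
    dampedCoshSinh k D c t = (1 / 2) * exp (-k * t) *
      (exp (t * D) + exp (-(t * D)) + c * (exp (t * D) - exp (-(t * D)))) := by
  rw [dampedCoshSinh, cosh_eq, sinh_eq]
  ring

theorem dampedCoshSinh_zero (k D c : ℝ) : dampedCoshSinh k D c 0 = 1 := by
  simp [dampedCoshSinh]

theorem continuous_dampedCoshSinh (k D c : ℝ) : Continuous (dampedCoshSinh k D c) := by
  unfold dampedCoshSinh
  fun_prop

theorem hasDerivAt_dampedCoshSinh (k D c t : ℝ) :
    HasDerivAt (dampedCoshSinh k D c)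
      (exp (-k * t) * ((D * c - k) * cosh (t * D) + (D - k * c) * sinh (t * D))) t := by
  have hdamp : HasDerivAt (fun t => -k * t) (-k) t := by
    simpa using (hasDerivAt_id t).const_mul (-k)
  have hlin : HasDerivAt (fun t => t * D) D t := by
    simpa using (hasDerivAt_id t).mul_const D
  exact (hdamp.exp.mul (hlin.cosh.add (hlin.sinh.const_mul c))).congr_deriv
    (by simp only [Pi.add_apply]; ring)

theorem dampedCoshSinh_volterra {k s P q D c c' : ℝ} (hD : D ≠ 0) (hD2 : D ^ 2 = s ^ 2 + P * q)
    (hc : D * c = P - s) (hc' : D * c' = q + s) (t : ℝ) :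
    dampedCoshSinh k D c t = exp (-(k + s) * t)
      + P * ∫ τ in (0:ℝ)..t, exp (-(k + s) * τ) * dampedCoshSinh k D c' (t - τ) := by
  have hsinh : D - k * c = P * c' - (k + s) * c := by
    apply mul_left_cancel₀ hD
    linear_combination hD2 - P * hc' + s * hc
  have hL : ∀ t, HasDerivAt (dampedCoshSinh k D c)
      (P * dampedCoshSinh k D c' t - (k + s) * dampedCoshSinh k D c t) t := by
    intro t
    convert hasDerivAt_dampedCoshSinh k D c t using 1
    rw [dampedCoshSinh, dampedCoshSinh, hc, hsinh]
    ring
  rw [eq_exp_mul_add_integral_of_hasDerivAt ((continuous_dampedCoshSinh k D c').const_mul P) hL,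
    dampedCoshSinh_zero, mul_one, ← integral_const_mul]
  simp only [mul_left_comm P]

theorem kac_levy_jump_volterra_solution_general
    (l0 l1 e0 e1 h0 h1 : ℝ)
    (lam μ e m D : ℝ)
    (hlam : lam = (l0 + l1) / 2) (hμ : μ = (l0 - l1) / 2)
    (he : e = (e0 + e1) / 2) (hm : m = (e0 - e1) / 2)
    (hD : D = Real.sqrt ((m + μ) ^ 2 + l0 * l1 * h0 * h1)) (hDpos : 0 < D)
    (L0 L1 : ℝ → ℝ)
    (hL0 : ∀ t, L0 t = (1 / 2) * Real.exp (-(lam + e) * t) *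
        (Real.exp (t * D) + Real.exp (-(t * D))
          + ((l0 * h0 - μ - m) / D) * (Real.exp (t * D) - Real.exp (-(t * D)))))
    (hL1 : ∀ t, L1 t = (1 / 2) * Real.exp (-(lam + e) * t) *
        (Real.exp (t * D) + Real.exp (-(t * D))
          + ((l1 * h1 + μ + m) / D) * (Real.exp (t * D) - Real.exp (-(t * D))))) :
    ∀ t : ℝ, 0 ≤ t →
      (L0 t = Real.exp (-(l0 + e0) * t)
        + l0 * h0 * ∫ τ in (0:ℝ)..t, Real.exp (-(l0 + e0) * τ) * L1 (t - τ)) ∧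
      (L1 t = Real.exp (-(l1 + e1) * t)
        + l1 * h1 * ∫ τ in (0:ℝ)..t, Real.exp (-(l1 + e1) * τ) * L0 (t - τ)) := by
  intro t _
  have hD0 : D ≠ 0 := hDpos.ne'
  have hD2 : D ^ 2 = (m + μ) ^ 2 + l0 * l1 * h0 * h1 :=
    hD ▸ sq_sqrt (sqrt_pos.mp (hD ▸ hDpos)).le
  obtain rfl : L0 = dampedCoshSinh (lam + e) D ((l0 * h0 - μ - m) / D) :=
    funext fun t => by rw [hL0, dampedCoshSinh_eq]
  obtain rfl : L1 = dampedCoshSinh (lam + e) D ((l1 * h1 + μ + m) / D) :=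
    funext fun t => by rw [hL1, dampedCoshSinh_eq]
  have hk0 : lam + e + (μ + m) = l0 + e0 := by rw [hlam, hμ, he, hm]; ring
  have hk1 : lam + e + -(μ + m) = l1 + e1 := by rw [hlam, hμ, he, hm]; ring
  constructor
  · rw [← hk0]
    exact dampedCoshSinh_volterra (q := l1 * h1) hD0 (by linear_combination hD2)
      (by rw [mul_div_cancel₀ _ hD0]; ring) (by rw [mul_div_cancel₀ _ hD0]; ring) t
  · rw [← hk1]
    exact dampedCoshSinh_volterra (q := l0 * h0) hD0 (by linear_combination hD2)
      (by rw [mul_div_cancel₀ _ hD0]; ring) (by rw [mul_div_cancel₀ _ hD0]; ring) t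

/-- Formulae (3.2)–(3.3) of Theorem 3.1 solve the coupled Volterra integral
equations (3.5) characterizing the Laplace transform of a Kac–Lévy process
with jumps. -/
theorem kac_levy_jump_volterra_solution
    (l0 l1 e0 e1 h0 h1 : ℝ) (hl0 : 0 < l0) (hl1 : 0 < l1)
    (hh0 : 0 < h0) (hh1 : 0 < h1)
    (lam μ e m D : ℝ)
    (hlam : lam = (l0 + l1) / 2) (hμ : μ = (l0 - l1) / 2)
    (he : e = (e0 + e1) / 2) (hm : m = (e0 - e1) / 2)
    (hD : D = Real.sqrt ((m + μ) ^ 2 + l0 * l1 * h0 * h1)) (hDpos : 0 < D)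
    (L0 L1 : ℝ → ℝ)
    (hL0 : ∀ t, L0 t = (1 / 2) * Real.exp (-(lam + e) * t) *
        (Real.exp (t * D) + Real.exp (-(t * D))
          + ((l0 * h0 - μ - m) / D) * (Real.exp (t * D) - Real.exp (-(t * D)))))
    (hL1 : ∀ t, L1 t = (1 / 2) * Real.exp (-(lam + e) * t) *
        (Real.exp (t * D) + Real.exp (-(t * D))
          + ((l1 * h1 + μ + m) / D) * (Real.exp (t * D) - Real.exp (-(t * D))))) :
    ∀ t : ℝ, 0 ≤ t →
      (L0 t = Real.exp (-(l0 + e0) * t)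
        + l0 * h0 * ∫ τ in (0:ℝ)..t, Real.exp (-(l0 + e0) * τ) * L1 (t - τ)) ∧
      (L1 t = Real.exp (-(l1 + e1) * t)
        + l1 * h1 * ∫ τ in (0:ℝ)..t, Real.exp (-(l1 + e1) * τ) * L0 (t - τ)) :=
  kac_levy_jump_volterra_solution_general l0 l1 e0 e1 h0 h1 lam μ e m D hlam hμ he hm hD hDpos L0 L1
    hL0 hL1
end

section
/- Let c0 > c1 > 0, λ0, λ1 > 0, y0 ≤ 0 and y1 = −y0. Set a = 1/c0, b = 1/c1, α = λ0/c0, β = λ1/c1, A0 = (b e^{−y0} − a)^{−α−β} / B(α, β+1), A1 = (b − a e^{−y1})^{−α−β} / B(α+1, β), and define f0(t) = A0 (t−a)^{α−1} (b e^{−y0} − t)^{β} 1_{a < t < b e^{−y0}}, f1(t) = A1 (t − a e^{−y1})^{α} (b − t)^{β−1} 1_{a e^{−y1} < t < b}. Then the pair (f0, f1) satisfies the coupled integral equations: for all t with a < t < b e^{−y0}, f0(t) = α (t−a)^{α−1} ∫_{t e^{y0}}^{b} (u e^{−y0} − a)^{−α} f1(u) du; and for all t with a e^{−y1} < t < b,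 f1(t) = β (b−t)^{β−1} ∫_{a}^{t e^{y1}} (b − u e^{−y1})^{−β} f0(u) du. -/
/-! With `E = e^{-y0}`, on the range of integration each integrand collapses to a constant times a
single power: `(u E - a)^{-α}` cancels the factor `(u - a/E)^α` of `f1` up to `E^{-α}`, and
`(b - u/E)^{-β}` cancels the factor `(b E - u)^β` of `f0` up to `E^β`. The remaining integrals are
elementary, and the constants match because the Beta recurrence `x B(x, y+1) = y B(x+1, y)` gives
`α A1 = β A0 E^{α+β}`. -/

open MeasureTheory intervalIntegral

/-- The Beta function `B(x,y) = Γ(x)Γ(y)/Γ(x+y)`. -/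
noncomputable def realBeta (x y : ℝ) : ℝ := Real.Gamma x * Real.Gamma y / Real.Gamma (x + y)

open Set

lemma realBeta_pos {x y : ℝ} (hx : 0 < x) (hy : 0 < y) : 0 < realBeta x y :=
  div_pos (mul_pos (Real.Gamma_pos_of_pos hx) (Real.Gamma_pos_of_pos hy))
    (Real.Gamma_pos_of_pos (add_pos hx hy))

lemma mul_realBeta_add_one {x y : ℝ} (hx : x ≠ 0) (hy : y ≠ 0) :
    x * realBeta x (y + 1) = y * realBeta (x + 1) y := by
  unfold realBeta
  rw [Real.Gamma_add_one hy, Real.Gamma_add_one hx, ← add_assoc, add_right_comm x 1 y]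
  ring

lemma integral_sub_rpow_sub_one (c b : ℝ) {r : ℝ} (hr : 0 < r) :
    ∫ x in c..b, (b - x) ^ (r - 1) = (b - c) ^ r / r := by
  rw [integral_comp_sub_left (fun y => y ^ (r - 1)), sub_self,
    integral_rpow (Or.inl (by linarith)), sub_add_cancel, Real.zero_rpow hr.ne', sub_zero]

lemma integral_rpow_sub_one_sub (a c : ℝ) {r : ℝ} (hr : 0 < r) :
    ∫ x in a..c, (x - a) ^ (r - 1) = (c - a) ^ r / r := by
  rw [integral_comp_sub_right (fun y => y ^ (r - 1)), sub_self,
    integral_rpow (Or.inl (by linarith)), sub_add_cancel, Real.zero_rpow hr.ne', sub_zero]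

lemma mul_rpow_neg_mul_rpow {E x : ℝ} (hE : 0 ≤ E) (hx : 0 < x) (r : ℝ) :
    (E * x) ^ (-r) * x ^ r = (E ^ r)⁻¹ := by
  rw [Real.rpow_neg (by positivity), Real.mul_rpow hE hx.le, mul_inv, mul_assoc,
    inv_mul_cancel₀ (Real.rpow_pos_of_pos hx r).ne', mul_one]

lemma normalizing_constants_relation {a b E α β : ℝ} (hE : 0 < E) (hα : 0 < α) (hβ : 0 < β)
    (hab : a ≤ b * E) :
    α * ((b - a * E⁻¹) ^ (-(α + β)) / realBeta (α + 1) β)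
      = β * ((b * E - a) ^ (-(α + β)) / realBeta α (β + 1)) * E ^ (α + β) := by
  have hB₀ := realBeta_pos hα (add_pos hβ one_pos)
  have hB₁ := realBeta_pos (add_pos hα one_pos) hβ
  have hrec := mul_realBeta_add_one hα.ne' hβ.ne'
  rw [show b - a * E⁻¹ = E⁻¹ * (b * E - a) by field_simp,
    Real.mul_rpow (inv_nonneg.2 hE.le) (sub_nonneg.2 hab), Real.inv_rpow hE.le,
    Real.rpow_neg hE.le, inv_inv]
  field_simp
  linear_combination (b * E - a) ^ (-(α + β)) * hrec

theorem integral_equation_zero {a b E α β A0 A1 t : ℝ} {f0 f1 : ℝ → ℝ}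
    (hE : 0 < E) (hβ : 0 < β) (hrel : α * A1 = β * A0 * E ^ (α + β))
    (hf0 : EqOn f0 (fun u => A0 * (u - a) ^ (α - 1) * (b * E - u) ^ β) (Ioo a (b * E)))
    (hf1 : EqOn f1 (fun u => A1 * (u - a * E⁻¹) ^ α * (b - u) ^ (β - 1)) (Ioo (a * E⁻¹) b))
    (hat : a < t) (htb : t < b * E) :
    f0 t = α * (t - a) ^ (α - 1) * ∫ u in (t * E⁻¹)..b, (u * E - a) ^ (-α) * f1 u := by
  have htE : t * E⁻¹ < b := (mul_inv_lt_iff₀ hE).2 htb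
  have hint : ∫ u in (t * E⁻¹)..b, (u * E - a) ^ (-α) * f1 u
      = ∫ u in (t * E⁻¹)..b, A1 * (E ^ α)⁻¹ * (b - u) ^ (β - 1) := by
    refine integral_congr_Ioo_of_le htE.le fun u ⟨htu, hub⟩ => ?_
    have hau : a * E⁻¹ < u := lt_trans (mul_lt_mul_of_pos_right hat (inv_pos.2 hE)) htu
    have hscale := mul_rpow_neg_mul_rpow hE.le (sub_pos.2 hau) α
    rw [hf1 ⟨hau, hub⟩, show u * E - a = E * (u - a * E⁻¹) by field_simp]
    linear_combination A1 * (b - u) ^ (β - 1) * hscale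
  rw [hint, intervalIntegral.integral_const_mul, integral_sub_rpow_sub_one _ _ hβ, hf0 ⟨hat, htb⟩,
    show b - t * E⁻¹ = E⁻¹ * (b * E - t) by field_simp,
    Real.mul_rpow (inv_nonneg.2 hE.le) (by linarith), Real.inv_rpow hE.le]
  rw [Real.rpow_add hE] at hrel
  field_simp
  linear_combination -(t - a) ^ (α - 1) * (b * E - t) ^ β * hrel

theorem integral_equation_one {a b E α β A0 A1 t : ℝ} {f0 f1 : ℝ → ℝ}
    (hE : 0 < E) (hα : 0 < α) (hrel : α * A1 = β * A0 * E ^ (α + β))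
    (hf0 : EqOn f0 (fun u => A0 * (u - a) ^ (α - 1) * (b * E - u) ^ β) (Ioo a (b * E)))
    (hf1 : EqOn f1 (fun u => A1 * (u - a * E⁻¹) ^ α * (b - u) ^ (β - 1)) (Ioo (a * E⁻¹) b))
    (hat : a * E⁻¹ < t) (htb : t < b) :
    f1 t = β * (b - t) ^ (β - 1) * ∫ u in a..(t * E), (b - u * E⁻¹) ^ (-β) * f0 u := by
  have htE : a < t * E := (mul_inv_lt_iff₀ hE).1 hat
  have hint : ∫ u in a..(t * E), (b - u * E⁻¹) ^ (-β) * f0 u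
      = ∫ u in a..(t * E), E ^ β * A0 * (u - a) ^ (α - 1) := by
    refine integral_congr_Ioo_of_le htE.le fun u ⟨hau, hut⟩ => ?_
    have hub : u < b * E := hut.trans (mul_lt_mul_of_pos_right htb hE)
    have hscale := mul_rpow_neg_mul_rpow (inv_nonneg.2 hE.le) (sub_pos.2 hub) β
    rw [Real.inv_rpow hE.le, inv_inv] at hscale
    rw [hf0 ⟨hau, hub⟩, show b - u * E⁻¹ = E⁻¹ * (b * E - u) by field_simp]
    linear_combination A0 * (u - a) ^ (α - 1) * hscale
  rw [hint, intervalIntegral.integral_const_mul, integral_rpow_sub_one_sub _ _ hα, hf1 ⟨hat, htb⟩]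
  dsimp only
  rw [show t * E - a = E * (t - a * E⁻¹) by field_simp, Real.mul_rpow hE.le (by linarith)]
  rw [Real.rpow_add hE] at hrel
  generalize (t - a * E⁻¹) ^ α = X
  field_simp
  linear_combination X * (b - t) ^ (β - 1) * hrel

theorem jump_telegraph_exponential_functional_integral_equations_general
    (c0 c1 l0 l1 y0 y1 : ℝ) (hc : c1 < c0) (hc1 : 0 < c1)
    (hl0 : 0 < l0) (hl1 : 0 < l1) (hy1 : y1 = -y0)
    (a b α β A0 A1 : ℝ)
    (hαdef : α = l0 / c0) (hβdef : β = l1 / c1)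
    (hA0 : A0 = (b * Real.exp (-y0) - a) ^ (-(α + β)) / realBeta α (β + 1))
    (hA1 : A1 = (b - a * Real.exp (-y1)) ^ (-(α + β)) / realBeta (α + 1) β)
    (f0 f1 : ℝ → ℝ)
    (hf0 : ∀ t, f0 t = if a < t ∧ t < b * Real.exp (-y0) then
        A0 * (t - a) ^ (α - 1) * (b * Real.exp (-y0) - t) ^ β else 0)
    (hf1 : ∀ t, f1 t = if a * Real.exp (-y1) < t ∧ t < b then
        A1 * (t - a * Real.exp (-y1)) ^ α * (b - t) ^ (β - 1) else 0) :
    (∀ t, a < t → t < b * Real.exp (-y0) →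
      f0 t = α * (t - a) ^ (α - 1)
        * ∫ u in (t * Real.exp y0)..b, (u * Real.exp (-y0) - a) ^ (-α) * f1 u) ∧
    (∀ t, a * Real.exp (-y1) < t → t < b →
      f1 t = β * (b - t) ^ (β - 1)
        * ∫ u in a..(t * Real.exp y1), (b - u * Real.exp (-y1)) ^ (-β) * f0 u) := by
  have hα : 0 < α := hαdef ▸ div_pos hl0 (hc1.trans hc)
  have hβ : 0 < β := hβdef ▸ div_pos hl1 hc1
  subst hy1
  have hexp : Real.exp y0 = (Real.exp (-y0))⁻¹ := by rw [Real.exp_neg, inv_inv]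
  set E := Real.exp (-y0)
  have hE : 0 < E := Real.exp_pos _
  simp only [neg_neg, hexp] at hA1 hf1 ⊢
  have hrel (hab : a ≤ b * E) : α * A1 = β * A0 * E ^ (α + β) :=
    hA0 ▸ hA1 ▸ normalizing_constants_relation hE hα hβ hab
  have hf0' : EqOn f0 _ (Ioo a (b * E)) := fun u hu => (hf0 u).trans (if_pos hu)
  have hf1' : EqOn f1 _ (Ioo (a * E⁻¹) b) := fun u hu => (hf1 u).trans (if_pos hu)
  refine ⟨fun t hat htb => ?_, fun t hat htb => ?_⟩
  · exact integral_equation_zero hE hβ (hrel (hat.trans htb).le) hf0' hf1' hat htb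
  · have hab : a ≤ b * E := ((mul_inv_lt_iff₀ hE).1 (hat.trans htb)).le
    exact integral_equation_one hE hα (hrel hab) hf0' hf1' hat htb

/-- System (3.18)–(3.19) from the proof of Theorem 3.4: the explicit densities of the
exponential functional of a jump-telegraph process (case `c0 > c1 > 0`) solve the
coupled integral equations. -/
theorem jump_telegraph_exponential_functional_integral_equations
    (c0 c1 l0 l1 y0 y1 : ℝ) (hc : c1 < c0) (hc1 : 0 < c1)
    (hl0 : 0 < l0) (hl1 : 0 < l1) (hy0 : y0 ≤ 0) (hy1 : y1 = -y0)
    (a b α β A0 A1 : ℝ)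
    (hadef : a = 1 / c0) (hbdef : b = 1 / c1)
    (hαdef : α = l0 / c0) (hβdef : β = l1 / c1)
    (hA0 : A0 = (b * Real.exp (-y0) - a) ^ (-(α + β)) / realBeta α (β + 1))
    (hA1 : A1 = (b - a * Real.exp (-y1)) ^ (-(α + β)) / realBeta (α + 1) β)
    (f0 f1 : ℝ → ℝ)
    (hf0 : ∀ t, f0 t = if a < t ∧ t < b * Real.exp (-y0) then
        A0 * (t - a) ^ (α - 1) * (b * Real.exp (-y0) - t) ^ β else 0)
    (hf1 : ∀ t, f1 t = if a * Real.exp (-y1) < t ∧ t < b then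
        A1 * (t - a * Real.exp (-y1)) ^ α * (b - t) ^ (β - 1) else 0) :
    (∀ t, a < t → t < b * Real.exp (-y0) →
      f0 t = α * (t - a) ^ (α - 1)
        * ∫ u in (t * Real.exp y0)..b, (u * Real.exp (-y0) - a) ^ (-α) * f1 u) ∧
    (∀ t, a * Real.exp (-y1) < t → t < b →
      f1 t = β * (b - t) ^ (β - 1)
        * ∫ u in a..(t * Real.exp y1), (b - u * Real.exp (-y1)) ^ (-β) * f0 u) :=
  jump_telegraph_exponential_functional_integral_equations_general c0 c1 l0 l1 y0 y1 hc hc1 hl0 hl1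
    hy1 a b α β A0 A1 hαdef hβdef hA0 hA1 f0 f1 hf0 hf1
end

section
/- Let c0 > 0 = c1, λ0, λ1 > 0, y0 ≤ 0, y1 = −y0. Set a = 1/c0, α = λ0/c0, and define f0(t) = ((λ1 e^{y0})^{α}/Γ(α)) (t−a)^{α−1} e^{−λ1 e^{y0}(t−a)} 1_{t > a} and f1(t) = (λ1^{α+1}/Γ(α+1)) (t − a e^{−y1})^{α} e^{−λ1 (t − a e^{−y1})} 1_{t > a e^{−y1}}. Then f0 and f1 are probability density functions, and they satisfy: for all t > a, f0(t) = α (t−a)^{α−1} ∫_{t e^{y0}}^{∞} (u e^{−y0} − a)^{−α} f1(u) du; and for all t > a e^{−y1}, f1(t) = λ1 e^{−λ1 t} ∫_{a}^{t e^{y1}} e^{λ1 u e^{−y1}} f0(u) du. -/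
/-!
Both `f0` and `f1` are translates of Gamma densities, so nonnegativity and normalisation come
from Mathlib's Gamma distribution. Writing `e = exp y0`, in the first equation the factor
`(u / e - a) ^ (-α)` cancels the power in `f1`, leaving an exponential tail integral; in the
second the weight `exp (l1 u e)` cancels the exponential in `f0`, leaving
`∫ (u - a) ^ (α - 1) = (·) ^ α / α`. The constants then match through `Γ(α + 1) = α Γ(α)`.
-/

open MeasureTheory intervalIntegral Real Set ProbabilityTheory

/-- Density of `s + X` for `X ∼ Γ(α, r)`; it differs from `gammaPDFReal α r (t - s)` only at
`t = s`. -/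
noncomputable def shiftedGammaPDF (α r s t : ℝ) : ℝ :=
  if s < t then r ^ α / Gamma α * (t - s) ^ (α - 1) * exp (-r * (t - s)) else 0

lemma shiftedGammaPDF_of_lt {α r s t : ℝ} (h : s < t) :
    shiftedGammaPDF α r s t = r ^ α / Gamma α * (t - s) ^ (α - 1) * exp (-r * (t - s)) :=
  if_pos h

lemma shiftedGammaPDF_eq_gammaPDFReal {α r s t : ℝ} (h : t ≠ s) :
    shiftedGammaPDF α r s t = gammaPDFReal α r (t - s) := by
  rcases h.lt_or_gt with h | h
  · rw [shiftedGammaPDF, gammaPDFReal, if_neg h.not_gt, if_neg (by linarith)]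
  · rw [shiftedGammaPDF_of_lt h, gammaPDFReal, if_pos (by linarith), neg_mul]

lemma shiftedGammaPDF_nonneg {α r : ℝ} (hα : 0 < α) (hr : 0 < r) (s t : ℝ) :
    0 ≤ shiftedGammaPDF α r s t := by
  rcases eq_or_ne t s with rfl | h
  · simp [shiftedGammaPDF]
  · exact shiftedGammaPDF_eq_gammaPDFReal h ▸ gammaPDFReal_nonneg hα hr _

lemma integral_gammaPDFReal_eq_one {α r : ℝ} (hα : 0 < α) (hr : 0 < r) :
    ∫ x, gammaPDFReal α r x = 1 := by
  rw [integral_eq_lintegral_of_nonneg_ae (ae_of_all _ (gammaPDFReal_nonneg hα hr))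
    (measurable_gammaPDFReal α r).aestronglyMeasurable]
  change (∫⁻ x, gammaPDF α r x).toReal = 1
  rw [lintegral_gammaPDF_eq_one hα hr, ENNReal.toReal_one]

lemma integral_shiftedGammaPDF {α r : ℝ} (hα : 0 < α) (hr : 0 < r) (s : ℝ) :
    ∫ t, shiftedGammaPDF α r s t = 1 := by
  have hae : (shiftedGammaPDF α r s) =ᵐ[volume] fun t => gammaPDFReal α r (t - s) := by
    filter_upwards [compl_mem_ae_iff.mpr (measure_singleton s)] with t ht
    exact shiftedGammaPDF_eq_gammaPDFReal ht
  rw [integral_congr_ae hae, integral_sub_right_eq_self (gammaPDFReal α r),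
    integral_gammaPDFReal_eq_one hα hr]

lemma integral_Ioi_exp_neg_mul_sub {l : ℝ} (hl : 0 < l) (b c : ℝ) :
    ∫ u in Ioi c, exp (-l * (u - b)) = exp (-l * (c - b)) / l := by
  simp_rw [mul_sub, exp_sub]
  rw [MeasureTheory.integral_div, integral_exp_mul_Ioi (by linarith)]
  field_simp

lemma integral_sub_rpow_sub_one_s15 {α : ℝ} (hα : 0 < α) (a c : ℝ) :
    ∫ u in a..c, (u - a) ^ (α - 1) = (c - a) ^ α / α := by
  rw [intervalIntegral.integral_comp_sub_right (fun x : ℝ => x ^ (α - 1)), sub_self,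
    integral_rpow (Or.inl (by linarith)), sub_add_cancel, zero_rpow hα.ne', sub_zero]

lemma shiftedGammaPDF_eq_mul_integral_Ioi {α l e a t : ℝ} (hα : 0 < α) (hl : 0 < l) (he : 0 < e)
    (ht : a < t) :
    shiftedGammaPDF α (l * e) a t = α * (t - a) ^ (α - 1) *
      ∫ u in Ioi (t * e), (u * e⁻¹ - a) ^ (-α) * shiftedGammaPDF (α + 1) l (a * e) u := by
  have hintegrand : ∀ u ∈ Ioi (t * e),
      (u * e⁻¹ - a) ^ (-α) * shiftedGammaPDF (α + 1) l (a * e) u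
        = e ^ α * (l ^ (α + 1) / Gamma (α + 1)) * exp (-l * (u - a * e)) := by
    intro u (hu : t * e < u)
    have hau : 0 < u - a * e := by nlinarith
    rw [shiftedGammaPDF_of_lt (by linarith), add_sub_cancel_right,
      show u * e⁻¹ - a = e⁻¹ * (u - a * e) by field_simp, mul_rpow (inv_nonneg.2 he.le) hau.le,
      inv_rpow he.le, rpow_neg he.le, inv_inv, rpow_neg hau.le]
    field_simp
  rw [setIntegral_congr_fun measurableSet_Ioi hintegrand, MeasureTheory.integral_const_mul,
    integral_Ioi_exp_neg_mul_sub hl, shiftedGammaPDF_of_lt ht, Gamma_add_one hα.ne',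
    rpow_add hl, rpow_one, mul_rpow hl.le he.le,
    show -l * (t * e - a * e) = -(l * e) * (t - a) by ring]
  field_simp

lemma shiftedGammaPDF_add_one_eq_mul_intervalIntegral {α l e a t : ℝ} (hα : 0 < α) (hl : 0 < l)
    (he : 0 < e) (ht : a * e < t) :
    shiftedGammaPDF (α + 1) l (a * e) t = l * exp (-l * t) *
      ∫ u in a..t * e⁻¹, exp (l * u * e) * shiftedGammaPDF α (l * e) a u := by
  have hat : a < t * e⁻¹ := by rwa [lt_mul_inv_iff₀ he]
  have hintegrand : ∀ u ∈ Ioc a (t * e⁻¹), exp (l * u * e) * shiftedGammaPDF α (l * e) a u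
      = (l * e) ^ α / Gamma α * exp (l * e * a) * (u - a) ^ (α - 1) := by
    intro u hu
    have hexp : exp (l * u * e) * exp (-(l * e) * (u - a)) = exp (l * e * a) := by
      rw [← exp_add]; ring_nf
    rw [shiftedGammaPDF_of_lt hu.1]
    linear_combination ((l * e) ^ α / Gamma α * (u - a) ^ (α - 1)) * hexp
  rw [integral_of_le hat.le, setIntegral_congr_fun measurableSet_Ioc hintegrand,
    MeasureTheory.integral_const_mul, ← integral_of_le hat.le, integral_sub_rpow_sub_one_s15 hα,
    shiftedGammaPDF_of_lt ht, add_sub_cancel_right,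
    show t * e⁻¹ - a = e⁻¹ * (t - a * e) by field_simp,
    mul_rpow (inv_nonneg.2 he.le) (by linarith), inv_rpow he.le, Gamma_add_one hα.ne',
    rpow_add hl, rpow_one, mul_rpow hl.le he.le,
    show -l * (t - a * e) = -l * t + l * e * a by ring, exp_add]
  field_simp

theorem jump_telegraph_exponential_functional_gamma_case_general
    (c0 l0 l1 y0 y1 : ℝ) (hc0 : 0 < c0)
    (hl0 : 0 < l0) (hl1 : 0 < l1) (hy1 : y1 = -y0)
    (a α : ℝ) (hαdef : α = l0 / c0)
    (f0 f1 : ℝ → ℝ)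
    (hf0 : ∀ t, f0 t = if a < t then
        ((l1 * Real.exp y0) ^ α / Real.Gamma α) * (t - a) ^ (α - 1)
          * Real.exp (-(l1 * Real.exp y0) * (t - a)) else 0)
    (hf1 : ∀ t, f1 t = if a * Real.exp (-y1) < t then
        (l1 ^ (α + 1) / Real.Gamma (α + 1)) * (t - a * Real.exp (-y1)) ^ α
          * Real.exp (-l1 * (t - a * Real.exp (-y1))) else 0) :
    (∀ t, 0 ≤ f0 t) ∧ (∀ t, 0 ≤ f1 t) ∧
    (∫ t, f0 t = 1) ∧ (∫ t, f1 t = 1) ∧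
    (∀ t, a < t →
      f0 t = α * (t - a) ^ (α - 1)
        * ∫ u in Set.Ioi (t * Real.exp y0), (u * Real.exp (-y0) - a) ^ (-α) * f1 u) ∧
    (∀ t, a * Real.exp (-y1) < t →
      f1 t = l1 * Real.exp (-l1 * t)
        * ∫ u in a..(t * Real.exp y1), Real.exp (l1 * u * Real.exp (-y1)) * f0 u) := by
  have hα : 0 < α := hαdef ▸ div_pos hl0 hc0
  have he : 0 < exp y0 := exp_pos y0
  have hl1e : 0 < l1 * exp y0 := mul_pos hl1 he
  have hf0' : f0 = shiftedGammaPDF α (l1 * exp y0) a := funext hf0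
  have hf1' : f1 = shiftedGammaPDF (α + 1) l1 (a * exp y0) := by
    funext t
    rw [hf1, shiftedGammaPDF, add_sub_cancel_right, hy1, neg_neg]
  rw [hf0', hf1', hy1, neg_neg, exp_neg]
  exact ⟨shiftedGammaPDF_nonneg hα hl1e a, shiftedGammaPDF_nonneg (by positivity) hl1 _,
    integral_shiftedGammaPDF hα hl1e a, integral_shiftedGammaPDF (by positivity) hl1 _,
    fun _ ht => shiftedGammaPDF_eq_mul_integral_Ioi hα hl1 he ht,
    fun _ ht => shiftedGammaPDF_add_one_eq_mul_intervalIntegral hα hl1 he ht⟩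

/-- Theorem 3.4, case `c0 > 0 = c1` (formulae (3.17)): shifted Gamma-type densities of
the exponential functional of a jump-telegraph process, and the coupled integral
equations they satisfy. -/
theorem jump_telegraph_exponential_functional_gamma_case
    (c0 l0 l1 y0 y1 : ℝ) (hc0 : 0 < c0)
    (hl0 : 0 < l0) (hl1 : 0 < l1) (hy0 : y0 ≤ 0) (hy1 : y1 = -y0)
    (a α : ℝ) (hadef : a = 1 / c0) (hαdef : α = l0 / c0)
    (f0 f1 : ℝ → ℝ)
    (hf0 : ∀ t, f0 t = if a < t then
        ((l1 * Real.exp y0) ^ α / Real.Gamma α) * (t - a) ^ (α - 1)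
          * Real.exp (-(l1 * Real.exp y0) * (t - a)) else 0)
    (hf1 : ∀ t, f1 t = if a * Real.exp (-y1) < t then
        (l1 ^ (α + 1) / Real.Gamma (α + 1)) * (t - a * Real.exp (-y1)) ^ α
          * Real.exp (-l1 * (t - a * Real.exp (-y1))) else 0) :
    (∀ t, 0 ≤ f0 t) ∧ (∀ t, 0 ≤ f1 t) ∧
    (∫ t, f0 t = 1) ∧ (∫ t, f1 t = 1) ∧
    (∀ t, a < t →
      f0 t = α * (t - a) ^ (α - 1)
        * ∫ u in Set.Ioi (t * Real.exp y0), (u * Real.exp (-y0) - a) ^ (-α) * f1 u) ∧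
    (∀ t, a * Real.exp (-y1) < t →
      f1 t = l1 * Real.exp (-l1 * t)
        * ∫ u in a..(t * Real.exp y1), Real.exp (l1 * u * Real.exp (-y1)) * f0 u) :=
  jump_telegraph_exponential_functional_gamma_case_general c0 l0 l1 y0 y1 hc0 hl0 hl1 hy1 a α hαdef
    f0 f1 hf0 hf1
end
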